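/- arXiv:2009.07321 — 11 statements merged into one kernel-verified Lean document; each statement's English description precedes it below -/
import Mathlib

section
/- Let α ∈ (1,2), λ ≥ 0, h > 0, and let γ₃ be real with max{(2−α)(α²+α−8)/(2(α²+3α+2)), (1−α)(α²+2α)/(2(α²+3α+4))} < γ₃ < (2−α)(α²+2α−3)/(2(α²+3α+2)). Set γ₁ = α/2 + γ₃ and γ₂ = (2−α)/2 − 2γ₃, and define the second-order tempered-WSGD weights g_{0,λ} = γ₁ω_0^(α)e^{hλ}, g_{1,λ} = γ₁ω_1^(α) + γ₂ω_0^(α), and g_{k,λ} = (γ₁ω_k^(α) + γ₂ω_{k−1}^(α) + γ₃ω_{k−2}^(α))e^{−(k−1)hλ} for k ≥ 2. Then g_{1,λ} ≤ 0, g_{0,λ} + g_{2,λ} ≥ 0, and g_{k,λ} ≥ 0 for every k ≥ 3. -/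
private lemma wsgd_aux_rec (α : ℝ) (ω : ℕ → ℝ)
    (hω : ∀ k : ℕ, ω k =
      (-1 : ℝ) ^ k * (∏ i ∈ Finset.range k, (α - (i : ℝ))) / (Nat.factorial k : ℝ)) :
    ∀ k : ℕ, ω (k+1) = ω k * ((k:ℝ) - α) / ((k:ℝ)+1) := by
  intro k
  have h1 : ((Nat.factorial k : ℝ)) ≠ 0 := Nat.cast_ne_zero.mpr (Nat.factorial_ne_zero k)
  rw [hω, hω, Finset.prod_range_succ, pow_succ, Nat.factorial_succ]
  push_cast
  field_simp
  ring

private lemma wsgd_aux_E (α γ₁ γ₂ γ₃ x : ℝ) (hα1 : 1 < α) (hα2 : α < 2) (hx : 2 ≤ x)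
    (h1 : 0 ≤ γ₁) (h2 : 0 ≤ γ₂)
    (hA : (2-α)*(α^2+α-8) < γ₃ * (2*(α^2+3*α+2)))
    (hγ₁ : γ₁ = α / 2 + γ₃) (hγ₂ : γ₂ = (2 - α) / 2 - 2 * γ₃) :
    0 ≤ γ₁*(x+1-α)*(x-α) + γ₂*(x-α)*(x+2) + γ₃*(x+1)*(x+2) := by
  have hE2 : 0 ≤ γ₁*(3-α)*(2-α) + γ₂*(2-α)*4 + γ₃*12 := by nlinarith
  have hx2 : (0:ℝ) ≤ x - 2 := by linarith
  have f1 : 0 ≤ 4*(x+1-α)+(2-α)*(x+1) := by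
    nlinarith [mul_nonneg (by linarith : (0:ℝ) ≤ 2-α) (by linarith : (0:ℝ) ≤ x+1)]
  have t1 : 0 ≤ γ₁*((1+α)*(x-2)*(4*(x+1-α)+(2-α)*(x+1))) :=
    mul_nonneg h1 (mul_nonneg (mul_nonneg (by linarith) hx2) f1)
  have t2 : 0 ≤ γ₂*(4*(x+2)*(x-2)*(1+α)) :=
    mul_nonneg h2 (mul_nonneg (mul_nonneg (mul_nonneg (by norm_num) (by linarith)) hx2) (by linarith))
  have t3 : 0 ≤ (x+1)*(x+2)*(γ₁*(3-α)*(2-α) + γ₂*(2-α)*4 + γ₃*12) :=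
    mul_nonneg (mul_nonneg (by linarith) (by linarith)) hE2
  nlinarith [t1, t2, t3]

set_option maxHeartbeats 1600000 in
/-- sign properties of the second-order tempered-WSGD weights. -/
theorem second_order_tempered_WSGD_weights_signs
    (α lam h γ₁ γ₂ γ₃ : ℝ) (hα1 : 1 < α) (hα2 : α < 2) (hlam : 0 ≤ lam) (hh : 0 < h)
    (hγ₃l : max ((2 - α) * (α ^ 2 + α - 8) / (2 * (α ^ 2 + 3 * α + 2)))
              ((1 - α) * (α ^ 2 + 2 * α) / (2 * (α ^ 2 + 3 * α + 4))) < γ₃)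
    (hγ₃r : γ₃ < (2 - α) * (α ^ 2 + 2 * α - 3) / (2 * (α ^ 2 + 3 * α + 2)))
    (hγ₁ : γ₁ = α / 2 + γ₃) (hγ₂ : γ₂ = (2 - α) / 2 - 2 * γ₃)
    (ω : ℕ → ℝ)
    (hω : ∀ k : ℕ, ω k =
      (-1 : ℝ) ^ k * (∏ i ∈ Finset.range k, (α - (i : ℝ))) / (Nat.factorial k : ℝ))
    (g : ℕ → ℝ)
    (hg0 : g 0 = γ₁ * ω 0 * Real.exp (h * lam))
    (hg1 : g 1 = γ₁ * ω 1 + γ₂ * ω 0)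
    (hgk : ∀ k : ℕ, 2 ≤ k → g k =
      (γ₁ * ω k + γ₂ * ω (k - 1) + γ₃ * ω (k - 2)) * Real.exp (-((k : ℝ) - 1) * h * lam)) :
    g 1 ≤ 0 ∧ 0 ≤ g 0 + g 2 ∧ ∀ k : ℕ, 3 ≤ k → 0 ≤ g k := by
  have hd1 : (0:ℝ) < 2 * (α ^ 2 + 3 * α + 2) := by nlinarith
  have hd2 : (0:ℝ) < 2 * (α ^ 2 + 3 * α + 4) := by nlinarith
  have hmax := max_lt_iff.mp hγ₃l
  have hA : (2-α)*(α^2+α-8) < γ₃ * (2*(α^2+3*α+2)) := by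
    have := hmax.1; rw [div_lt_iff₀ hd1] at this; linarith
  have hB : (1-α)*(α^2+2*α) < γ₃ * (2*(α^2+3*α+4)) := by
    have := hmax.2; rw [div_lt_iff₀ hd2] at this; linarith
  have hC : γ₃ * (2*(α^2+3*α+2)) < (2-α)*(α^2+2*α-3) := by
    rw [lt_div_iff₀ hd1] at hγ₃r; linarith
  have hγ₁pos : 0 ≤ γ₁ := by nlinarith
  have hγ₂pos : 0 ≤ γ₂ := by nlinarith
  have hω0 : ω 0 = 1 := by rw [hω]; simp
  have hrec := wsgd_aux_rec α ω hω
  have hω1 : ω 1 = -α := by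
    have := hrec 0; rw [hω0] at this; simpa using this
  have hω2 : ω 2 = α*(α-1)/2 := by
    have := hrec 1; rw [hω1] at this; norm_num at this; rw [this]; ring
  have hω3 : ω 3 = α*(α-1)*(2-α)/6 := by
    have := hrec 2; rw [hω2] at this; norm_num at this; rw [this]; ring
  have hωpos : ∀ k : ℕ, 2 ≤ k → 0 < ω k := by
    intro k hk
    induction k, hk using Nat.le_induction with
    | base => rw [hω2]; nlinarith
    | succ n hn ih =>
      have hcn : (2:ℝ) ≤ (n:ℝ) := by exact_mod_cast hn
      rw [hrec n]
      apply div_pos (mul_pos ih (by linarith)) (by linarith)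
  refine ⟨?_, ?_, ?_⟩
  · rw [hg1, hω0, hω1]; nlinarith
  · have hg2 := hgk 2 (le_refl 2)
    norm_num at hg2
    rw [hg0, hg2, hω0, hω1, hω2]
    have he1 : Real.exp (-(h*lam)) ≤ Real.exp (h*lam) := by
      apply Real.exp_le_exp.mpr; nlinarith
    have he2 : 0 < Real.exp (-(h*lam)) := Real.exp_pos _
    have key : 0 ≤ γ₁ + (γ₁ * (α*(α-1)/2) + γ₂ * (-α) + γ₃ * 1) := by nlinarith
    nlinarith [mul_le_mul_of_nonneg_left he1 hγ₁pos, mul_nonneg key he2.le]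
  · intro k hk
    have main : ∀ n : ℕ, 2 ≤ n → 0 ≤ γ₁ * ω (n+2) + γ₂ * ω (n+1) + γ₃ * ω n := by
      intro n hn
      have hωn := hωpos n hn
      have hx : (2:ℝ) ≤ (n:ℝ) := by exact_mod_cast hn
      set x : ℝ := (n:ℝ) with hxdef
      have hx1 : x + 1 ≠ 0 := by positivity
      have hx2 : x + 2 ≠ 0 := by positivity
      have h1 : ω (n+1) = ω n * (x - α) / (x+1) := hrec n
      have h2 : ω (n+2) = ω n * (x - α) * (x+1-α) / ((x+1)*(x+2)) := by
        have h' := hrec (n+1)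
        push_cast at h'
        rw [h1] at h'
        rw [show (n+1)+1 = n+2 from rfl] at h'
        rw [← hxdef] at h'
        rw [show x+1+1 = x+2 by ring] at h'
        rw [h']
        field_simp
      have hE := wsgd_aux_E α γ₁ γ₂ γ₃ x hα1 hα2 hx hγ₁pos hγ₂pos hA hγ₁ hγ₂
      have hden : (0:ℝ) < (x+1)*(x+2) := by positivity
      rw [h1, h2]
      have heq : γ₁ * (ω n * (x - α) * (x+1-α) / ((x+1)*(x+2))) + γ₂ * (ω n * (x - α) / (x+1)) + γ₃ * ω n
          = ω n * (γ₁*(x+1-α)*(x-α) + γ₂*(x-α)*(x+2) + γ₃*(x+1)*(x+2)) / ((x+1)*(x+2)) := by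
        field_simp
      rw [heq]
      positivity
    rcases Nat.lt_or_ge k 4 with hk4 | hk4
    · interval_cases k
      have hg3 := hgk 3 (by norm_num)
      norm_num at hg3
      rw [hg3, hω1, hω2, hω3]
      apply mul_nonneg _ (Real.exp_pos _).le
      rw [hγ₁, hγ₂]
      nlinarith [mul_pos (by linarith : (0:ℝ) < α)
        (by linarith : (0:ℝ) < (2-α)*(α^2+2*α-3) - γ₃ * (2*(α^2+3*α+2)))]
    · obtain ⟨n, rfl⟩ : ∃ n, k = n + 2 := ⟨k - 2, by omega⟩
      have hn : 2 ≤ n := by omega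
      have hgk' := hgk (n+2) (by omega)
      have e1 : n + 2 - 1 = n + 1 := by omega
      have e2 : n + 2 - 2 = n := by omega
      rw [e1, e2] at hgk'
      rw [hgk']
      exact mul_nonneg (main n hn) (Real.exp_pos _).le
end

section
/- For every real α with 1.26 < α < 1.71, one has a₃(α) < a₄(α), where a₃(α) = max{(α⁵/8 + 7α⁴/12 − 5α³/8 − 49α²/12 + 3α)/(α³+6α²+11α+6), (α⁵/8 + α⁴/3 − 67α³/24 − 23α²/6 + 175α/6 − 30)/(α³+6α²+11α+6)} and a₄(α) = min{(α⁴/8 + 7α³/12 + α²/8 − 13α/6)/(α²+5α+8), (α⁵/8 + 11α⁴/24 − 41α³/24 − 107α²/24 + 163α/12 − 8)/(α³+6α²+11α+6)}. In particular the open interval (a₃(α), a₄(α)) is nonempty. -/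
noncomputable def a₃ (α : ℝ) : ℝ :=
  max ((α ^ 5 / 8 + 7 * α ^ 4 / 12 - 5 * α ^ 3 / 8 - 49 * α ^ 2 / 12 + 3 * α) /
        (α ^ 3 + 6 * α ^ 2 + 11 * α + 6))
      ((α ^ 5 / 8 + α ^ 4 / 3 - 67 * α ^ 3 / 24 - 23 * α ^ 2 / 6 + 175 * α / 6 - 30) /
        (α ^ 3 + 6 * α ^ 2 + 11 * α + 6))

noncomputable def a₄ (α : ℝ) : ℝ :=
  min ((α ^ 4 / 8 + 7 * α ^ 3 / 12 + α ^ 2 / 8 - 13 * α / 6) / (α ^ 2 + 5 * α + 8))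
      ((α ^ 5 / 8 + 11 * α ^ 4 / 24 - 41 * α ^ 3 / 24 - 107 * α ^ 2 / 24 + 163 * α / 12 - 8) /
        (α ^ 3 + 6 * α ^ 2 + 11 * α + 6))

/-- for `1.26 < α < 1.71` one has `a₃(α) < a₄(α)`, so `(a₃(α), a₄(α)) ≠ ∅`. -/
theorem a₃_lt_a₄ (α : ℝ) (h1 : 1.26 < α) (h2 : α < 1.71) :
    a₃ α < a₄ α ∧ (Set.Ioo (a₃ α) (a₄ α)).Nonempty := by
  have hα : (0:ℝ) < α := by linarith
  have hD1 : (0:ℝ) < α ^ 3 + 6 * α ^ 2 + 11 * α + 6 := by nlinarith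
  have hD2 : (0:ℝ) < α ^ 2 + 5 * α + 8 := by nlinarith
  have key : a₃ α < a₄ α := by
    rw [a₃, a₄, max_lt_iff, lt_min_iff, lt_min_iff]
    have hp : (0:ℝ) < (α - 1.26) * (1.71 - α) := by nlinarith
    refine ⟨⟨?_, ?_⟩, ?_, ?_⟩
    · rw [div_lt_div_iff₀ hD1 hD2]; nlinarith [sq_nonneg α, sq_nonneg (α-1), mul_pos hα hp, mul_pos (mul_pos hα hα) hp]
    · rw [div_lt_div_iff₀ hD1 hD1]; nlinarith [sq_nonneg α, sq_nonneg (α-1), mul_pos hα hp, mul_pos (mul_pos hα hα) hp]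
    · rw [div_lt_div_iff₀ hD1 hD2]; nlinarith [sq_nonneg (α-1.5), mul_pos hα hp, mul_pos (mul_pos hα hα) hp, mul_pos (mul_pos (mul_pos hα hα) hα) hp, mul_pos hp hp, sq_nonneg (α^2-2)]
    · rw [div_lt_div_iff₀ hD1 hD1]; nlinarith [sq_nonneg α, sq_nonneg (α-1), mul_pos hα hp, mul_pos (mul_pos hα hα) hp]
  exact ⟨key, Set.nonempty_Ioo.mpr key⟩
end

section
/- Let α ∈ (1.26, 1.71), λ ≥ 0, h > 0, and let γ₄ be real with a₃(α) ≤ γ₄ ≤ a₄(α). Then the third-order tempered-WSGD weights satisfy g_{1,λ} ≤ 0, g_{0,λ} + g_{2,λ} ≥ 0, and g_{k,λ} ≥ 0 for every integer k ≥ 3. -/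
open Finset Real

noncomputable def grunwaldWeight (α : ℝ) (k : ℕ) : ℝ :=
  (-1 : ℝ) ^ k * (∏ i ∈ range k, (α - (i : ℝ))) / (k.factorial : ℝ)

section Grunwald

variable (α : ℝ)

@[simp]
theorem grunwaldWeight_zero : grunwaldWeight α 0 = 1 := by
  simp [grunwaldWeight]

theorem grunwaldWeight_succ (m : ℕ) :
    grunwaldWeight α (m + 1) = grunwaldWeight α m * ((m - α) / (m + 1)) := by
  have : ((m.factorial : ℕ) : ℝ) ≠ 0 := by positivity
  simp only [grunwaldWeight, prod_range_succ, Nat.factorial_succ, pow_succ]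
  push_cast
  field_simp
  ring

@[simp]
theorem grunwaldWeight_one : grunwaldWeight α 1 = -α := by
  simp [grunwaldWeight_succ]

@[simp]
theorem grunwaldWeight_two : grunwaldWeight α 2 = α * (α - 1) / 2 := by
  rw [grunwaldWeight_succ, grunwaldWeight_one]; push_cast; ring

@[simp]
theorem grunwaldWeight_three : grunwaldWeight α 3 = α * (α - 1) * (2 - α) / 6 := by
  rw [grunwaldWeight_succ, grunwaldWeight_two]; push_cast; ring

@[simp]
theorem grunwaldWeight_four :
    grunwaldWeight α 4 = α * (α - 1) * (2 - α) * (3 - α) / 24 := by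
  rw [grunwaldWeight_succ, grunwaldWeight_three]; push_cast; ring

variable {α}

theorem grunwaldWeight_nonneg (h₁ : 1 ≤ α) (h₂ : α ≤ 2) {k : ℕ} (hk : 2 ≤ k) :
    0 ≤ grunwaldWeight α k := by
  induction k, hk using Nat.le_induction with
  | base => rw [grunwaldWeight_two]; nlinarith
  | succ m hm ih =>
    rw [grunwaldWeight_succ]
    have : (2 : ℝ) ≤ m := by exact_mod_cast hm
    exact mul_nonneg ih (div_nonneg (by linarith) (by positivity))

end Grunwald

theorem add_mul_exp_add_mul_exp_neg_nonneg {a b x : ℝ} (ha : 0 ≤ a) (hab : 0 ≤ a + b)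
    (hx : 0 ≤ x) : 0 ≤ a * exp x + b * exp (-x) := by
  have : exp (-x) ≤ exp x := exp_le_exp.2 (by linarith)
  nlinarith [mul_le_mul_of_nonneg_left this ha, exp_pos (-x)]

theorem a₃_le_iff {α γ : ℝ} (hα : 0 ≤ α) :
    a₃ α ≤ γ ↔
      α ^ 5 / 8 + 7 * α ^ 4 / 12 - 5 * α ^ 3 / 8 - 49 * α ^ 2 / 12 + 3 * α ≤
          γ * (α ^ 3 + 6 * α ^ 2 + 11 * α + 6) ∧
        α ^ 5 / 8 + α ^ 4 / 3 - 67 * α ^ 3 / 24 - 23 * α ^ 2 / 6 + 175 * α / 6 - 30 ≤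
          γ * (α ^ 3 + 6 * α ^ 2 + 11 * α + 6) := by
  have : 0 < α ^ 3 + 6 * α ^ 2 + 11 * α + 6 := by positivity
  rw [a₃, max_le_iff, div_le_iff₀ this, div_le_iff₀ this]

theorem le_a₄_iff {α γ : ℝ} (hα : 0 ≤ α) :
    γ ≤ a₄ α ↔
      γ * (α ^ 2 + 5 * α + 8) ≤ α ^ 4 / 8 + 7 * α ^ 3 / 12 + α ^ 2 / 8 - 13 * α / 6 ∧
        γ * (α ^ 3 + 6 * α ^ 2 + 11 * α + 6) ≤
          α ^ 5 / 8 + 11 * α ^ 4 / 24 - 41 * α ^ 3 / 24 - 107 * α ^ 2 / 24 + 163 * α / 12 - 8 := by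
  have : 0 < α ^ 2 + 5 * α + 8 := by positivity
  have : 0 < α ^ 3 + 6 * α ^ 2 + 11 * α + 6 := by positivity
  rw [a₄, le_min_iff, le_div_iff₀ ‹0 < α ^ 2 + 5 * α + 8›, le_div_iff₀ this]

noncomputable def wsgdγ₁ (α γ₄ : ℝ) : ℝ := α ^ 2 / 8 + 5 * α / 24 - γ₄

noncomputable def wsgdγ₂ (α γ₄ : ℝ) : ℝ := -α ^ 2 / 4 + α / 12 + 1 + 3 * γ₄

noncomputable def wsgdγ₃ (α γ₄ : ℝ) : ℝ := α ^ 2 / 8 - 7 * α / 24 - 3 * γ₄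

/-- The third-order WSGD weights without tempering (`λ = 0`). -/
noncomputable def wsgdWeight (α γ₄ : ℝ) : ℕ → ℝ
  | 0 => wsgdγ₁ α γ₄ * grunwaldWeight α 0
  | 1 => wsgdγ₁ α γ₄ * grunwaldWeight α 1 + wsgdγ₂ α γ₄ * grunwaldWeight α 0
  | 2 => wsgdγ₁ α γ₄ * grunwaldWeight α 2 + wsgdγ₂ α γ₄ * grunwaldWeight α 1 +
      wsgdγ₃ α γ₄ * grunwaldWeight α 0
  | m + 3 => wsgdγ₁ α γ₄ * grunwaldWeight α (m + 3) + wsgdγ₂ α γ₄ * grunwaldWeight α (m + 2) +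
      wsgdγ₃ α γ₄ * grunwaldWeight α (m + 1) + γ₄ * grunwaldWeight α m

section Signs

variable {α γ₄ : ℝ}

theorem wsgdWeight_zero_nonneg (hα : 0 ≤ α) (hγ₄ : γ₄ ≤ a₄ α) :
    0 ≤ wsgdWeight α γ₄ 0 := by
  have := ((le_a₄_iff hα).1 hγ₄).1
  simp only [wsgdWeight, wsgdγ₁, grunwaldWeight_zero]
  nlinarith

theorem wsgdWeight_one_nonpos (hα : 1.26 < α) (hγ₄ : γ₄ ≤ a₄ α) : wsgdWeight α γ₄ 1 ≤ 0 := by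
  have hγ₄' := ((le_a₄_iff (by linarith)).1 hγ₄).1
  simp only [wsgdWeight, wsgdγ₁, wsgdγ₂, grunwaldWeight_zero, grunwaldWeight_one]
  have hD : 0 < α ^ 2 + 5 * α + 8 := by positivity
  have hsq : 1.5876 ≤ α ^ 2 := by nlinarith
  have hcube : 2.000376 ≤ α ^ 3 := by nlinarith
  refine nonpos_of_mul_nonpos_left ?_ hD
  nlinarith [mul_le_mul_of_nonneg_left hγ₄' (show (0:ℝ) ≤ α + 3 by linarith)]

theorem wsgdWeight_zero_add_two_nonneg (hα : 0 ≤ α) (hγ₄ : γ₄ ≤ a₄ α) :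
    0 ≤ wsgdWeight α γ₄ 0 + wsgdWeight α γ₄ 2 := by
  have := ((le_a₄_iff hα).1 hγ₄).1
  simp only [wsgdWeight, wsgdγ₁, wsgdγ₂, wsgdγ₃, grunwaldWeight_zero, grunwaldWeight_one,
    grunwaldWeight_two]
  nlinarith

theorem wsgdWeight_three_nonneg (hα : 0 ≤ α) (hγ₄ : a₃ α ≤ γ₄) : 0 ≤ wsgdWeight α γ₄ 3 := by
  have := ((a₃_le_iff hα).1 hγ₄).1
  simp only [wsgdWeight, wsgdγ₁, wsgdγ₂, wsgdγ₃, Nat.reduceAdd, grunwaldWeight_zero,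
    grunwaldWeight_one, grunwaldWeight_two, grunwaldWeight_three]
  linarith

theorem wsgdWeight_four_nonneg (hα : 0 ≤ α) (hγ₄ : γ₄ ≤ a₄ α) : 0 ≤ wsgdWeight α γ₄ 4 := by
  have := ((le_a₄_iff hα).1 hγ₄).2
  simp only [wsgdWeight, wsgdγ₁, wsgdγ₂, wsgdγ₃, Nat.reduceAdd, grunwaldWeight_one,
    grunwaldWeight_two, grunwaldWeight_three, grunwaldWeight_four]
  linarith [mul_nonneg hα (sub_nonneg.2 this)]

theorem wsgdWeight_add_five_eq (α γ₄ : ℝ) (n : ℕ) :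
    wsgdWeight α γ₄ (n + 5) = grunwaldWeight α (n + 2) *
      (wsgdγ₁ α γ₄ * (n + 2 - α) * (n + 3 - α) * (n + 4 - α) +
        wsgdγ₂ α γ₄ * (n + 5) * (n + 2 - α) * (n + 3 - α) +
        wsgdγ₃ α γ₄ * (n + 5) * (n + 4) * (n + 2 - α) + γ₄ * (n + 5) * (n + 4) * (n + 3)) /
      ((n + 3) * (n + 4) * (n + 5)) := by
  simp only [wsgdWeight, grunwaldWeight_succ]
  push_cast
  field_simp
  ring

theorem wsgdWeight_add_five_nonneg (hα₁ : 1.26 < α) (hα₂ : α < 1.71) (hγ₄ : a₃ α ≤ γ₄)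
    (n : ℕ) : 0 ≤ wsgdWeight α γ₄ (n + 5) := by
  have := ((a₃_le_iff (by linarith)).1 hγ₄).2
  rw [wsgdWeight_add_five_eq]
  have hω : 0 ≤ grunwaldWeight α (n + 2) :=
    grunwaldWeight_nonneg (by linarith) (by linarith) le_add_self
  refine div_nonneg (mul_nonneg hω ?_) (by positivity)
  -- The factor is a monic cubic in `n` with the coefficients below; its constant term is
  -- `γ₄ (α + 1) (α + 2) (α + 3)` minus the second polynomial in `a₃`.
  have hn : (0 : ℝ) ≤ n := n.cast_nonneg
  have hcoeff₂ : 0 ≤ 10 - 5 * α / 2 - α ^ 2 / 2 := by nlinarith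
  have hcoeff₁ : 0 ≤ 31 - 217 * α / 12 - 9 * α ^ 2 / 8 + 13 * α ^ 3 / 12 + α ^ 4 / 8 := by
    nlinarith [sq_nonneg (α - 1.71), sq_nonneg α]
  simp only [wsgdγ₁, wsgdγ₂, wsgdγ₃]
  linarith [pow_nonneg hn 3, mul_nonneg hcoeff₂ (sq_nonneg (n : ℝ)), mul_nonneg hcoeff₁ hn]

theorem wsgdWeight_nonneg (hα₁ : 1.26 < α) (hα₂ : α < 1.71) (hγ₄l : a₃ α ≤ γ₄)
    (hγ₄r : γ₄ ≤ a₄ α) {k : ℕ} (hk : 3 ≤ k) : 0 ≤ wsgdWeight α γ₄ k := by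
  obtain ⟨n, rfl⟩ := Nat.exists_eq_add_of_le' hk
  match n with
  | 0 => exact wsgdWeight_three_nonneg (by linarith) hγ₄l
  | 1 => exact wsgdWeight_four_nonneg (by linarith) hγ₄r
  | n + 2 => exact wsgdWeight_add_five_nonneg hα₁ hα₂ hγ₄l n

end Signs

/-- sign properties of the third-order tempered-WSGD weights for
`α ∈ (1.26, 1.71)` and `a₃(α) ≤ γ₄ ≤ a₄(α)`. -/
theorem third_order_tempered_WSGD_weights_signs
    (α lam h γ₁ γ₂ γ₃ γ₄ : ℝ) (hα1 : 1.26 < α) (hα2 : α < 1.71)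
    (hlam : 0 ≤ lam) (hh : 0 < h)
    (hγ₄l : a₃ α ≤ γ₄) (hγ₄r : γ₄ ≤ a₄ α)
    (hγ₁ : γ₁ = α ^ 2 / 8 + 5 * α / 24 - γ₄)
    (hγ₂ : γ₂ = -α ^ 2 / 4 + α / 12 + 1 + 3 * γ₄)
    (hγ₃ : γ₃ = α ^ 2 / 8 - 7 * α / 24 - 3 * γ₄)
    (ω : ℕ → ℝ)
    (hω : ∀ k : ℕ, ω k =
      (-1 : ℝ) ^ k * (∏ i ∈ Finset.range k, (α - (i : ℝ))) / (Nat.factorial k : ℝ))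
    (g : ℕ → ℝ)
    (hg0 : g 0 = γ₁ * ω 0 * Real.exp (h * lam))
    (hg1 : g 1 = γ₁ * ω 1 + γ₂ * ω 0)
    (hg2 : g 2 = (γ₁ * ω 2 + γ₂ * ω 1 + γ₃ * ω 0) * Real.exp (-(h * lam)))
    (hgk : ∀ k : ℕ, 3 ≤ k → g k =
      (γ₁ * ω k + γ₂ * ω (k - 1) + γ₃ * ω (k - 2) + γ₄ * ω (k - 3)) *
        Real.exp (-((k : ℝ) - 1) * h * lam)) :
    g 1 ≤ 0 ∧ 0 ≤ g 0 + g 2 ∧ ∀ k : ℕ, 3 ≤ k → 0 ≤ g k := by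
  obtain rfl : ω = grunwaldWeight α := funext hω
  obtain rfl : γ₁ = wsgdγ₁ α γ₄ := hγ₁
  obtain rfl : γ₂ = wsgdγ₂ α γ₄ := hγ₂
  obtain rfl : γ₃ = wsgdγ₃ α γ₄ := hγ₃
  have hα : 0 ≤ α := by linarith
  refine ⟨hg1 ▸ wsgdWeight_one_nonpos hα1 hγ₄r, ?_, fun k hk => ?_⟩
  · rw [hg0, hg2]
    exact add_mul_exp_add_mul_exp_neg_nonneg (wsgdWeight_zero_nonneg hα hγ₄r)
      (wsgdWeight_zero_add_two_nonneg hα hγ₄r) (by positivity)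
  · obtain ⟨m, rfl⟩ := Nat.exists_eq_add_of_le' hk
    rw [hgk _ hk]
    exact mul_nonneg (wsgdWeight_nonneg hα1 hα2 hγ₄l hγ₄r hk) (exp_pos _).le
end

section
/- Let α ∈ (1,2), λ ≥ 0, h > 0, and let γ₄ be real with γ₄ ≥ (α⁵/8 + 7α⁴/12 − 5α³/8 − 49α²/12 + 3α)/(α³+6α²+11α+6). Then the third-order tempered-WSGD weight g_{3,λ} = (γ₁ω_3^(α) + γ₂ω_2^(α) + γ₃ω_1^(α) + γ₄ω_0^(α))e^{−2hλ} satisfies g_{3,λ} ≥ 0. -/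
/-- for `α ∈ (1,2)` and
`γ₄ ≥ (α⁵/8 + 7α⁴/12 − 5α³/8 − 49α²/12 + 3α)/(α³+6α²+11α+6)`, the weight
`g₃ = (γ₁ω₃ + γ₂ω₂ + γ₃ω₁ + γ₄ω₀)e^{−2hλ}` is nonnegative. -/
theorem third_order_weights_g3_nonneg
    (α lam h γ₁ γ₂ γ₃ γ₄ : ℝ) (hα1 : 1 < α) (hα2 : α < 2) (hlam : 0 ≤ lam) (hh : 0 < h)
    (hγ₄ : (α ^ 5 / 8 + 7 * α ^ 4 / 12 - 5 * α ^ 3 / 8 - 49 * α ^ 2 / 12 + 3 * α) /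
        (α ^ 3 + 6 * α ^ 2 + 11 * α + 6) ≤ γ₄)
    (hγ₁ : γ₁ = α ^ 2 / 8 + 5 * α / 24 - γ₄)
    (hγ₂ : γ₂ = -α ^ 2 / 4 + α / 12 + 1 + 3 * γ₄)
    (hγ₃ : γ₃ = α ^ 2 / 8 - 7 * α / 24 - 3 * γ₄)
    (ω : ℕ → ℝ)
    (hω : ∀ k : ℕ, ω k =
      (-1 : ℝ) ^ k * (∏ i ∈ Finset.range k, (α - (i : ℝ))) / (Nat.factorial k : ℝ))
    (g₃ : ℝ)
    (hg3 : g₃ = (γ₁ * ω 3 + γ₂ * ω 2 + γ₃ * ω 1 + γ₄ * ω 0) * Real.exp (-2 * h * lam)) :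
    0 ≤ g₃ := by
  have hD : (0:ℝ) < α ^ 3 + 6 * α ^ 2 + 11 * α + 6 := by nlinarith
  have hN : α ^ 5 / 8 + 7 * α ^ 4 / 12 - 5 * α ^ 3 / 8 - 49 * α ^ 2 / 12 + 3 * α
      ≤ γ₄ * (α ^ 3 + 6 * α ^ 2 + 11 * α + 6) := by
    rw [div_le_iff₀ hD] at hγ₄; linarith
  have h0 : ω 0 = 1 := by simp [hω]
  have h1 : ω 1 = -α := by
    rw [hω]; simp [Finset.prod_range_succ]
  have h2 : ω 2 = α * (α - 1) / 2 := by
    rw [hω]; simp only [Finset.prod_range_succ, Finset.prod_range_zero, Nat.factorial]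
    push_cast; ring
  have h3 : ω 3 = -(α * (α - 1) * (α - 2)) / 6 := by
    rw [hω]; simp only [Finset.prod_range_succ, Finset.prod_range_zero, Nat.factorial]
    push_cast; ring
  have hinner : 0 ≤ γ₁ * ω 3 + γ₂ * ω 2 + γ₃ * ω 1 + γ₄ * ω 0 := by
    rw [h0, h1, h2, h3, hγ₁, hγ₂, hγ₃]; nlinarith [hN]
  rw [hg3]
  exact mul_nonneg hinner (Real.exp_pos _).le
end

section
/- Let α ∈ (1,2), λ ≥ 0, h > 0, and let γ₄ be real with γ₄ ≤ (α⁵/8 + 11α⁴/24 − 41α³/24 − 107α²/24 + 163α/12 − 8)/(α³+6α²+11α+6). Then the third-order tempered-WSGD weight g_{4,λ} = (γ₁ω_4^(α) + γ₂ω_3^(α) + γ₃ω_2^(α) + γ₄ω_1^(α))e^{−3hλ} satisfies g_{4,λ} ≥ 0. -/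
/-- for `α ∈ (1,2)` and
`γ₄ ≤ (α⁵/8 + 11α⁴/24 − 41α³/24 − 107α²/24 + 163α/12 − 8)/(α³+6α²+11α+6)`, the
weight `g₄ = (γ₁ω₄ + γ₂ω₃ + γ₃ω₂ + γ₄ω₁)e^{−3hλ}` is nonnegative. -/
theorem third_order_weights_g4_nonneg
    (α lam h γ₁ γ₂ γ₃ γ₄ : ℝ) (hα1 : 1 < α) (hα2 : α < 2) (hlam : 0 ≤ lam) (hh : 0 < h)
    (hγ₄ : γ₄ ≤ (α ^ 5 / 8 + 11 * α ^ 4 / 24 - 41 * α ^ 3 / 24 - 107 * α ^ 2 / 24 +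
        163 * α / 12 - 8) / (α ^ 3 + 6 * α ^ 2 + 11 * α + 6))
    (hγ₁ : γ₁ = α ^ 2 / 8 + 5 * α / 24 - γ₄)
    (hγ₂ : γ₂ = -α ^ 2 / 4 + α / 12 + 1 + 3 * γ₄)
    (hγ₃ : γ₃ = α ^ 2 / 8 - 7 * α / 24 - 3 * γ₄)
    (ω : ℕ → ℝ)
    (hω : ∀ k : ℕ, ω k =
      (-1 : ℝ) ^ k * (∏ i ∈ Finset.range k, (α - (i : ℝ))) / (Nat.factorial k : ℝ))
    (g₄ : ℝ)
    (hg4 : g₄ = (γ₁ * ω 4 + γ₂ * ω 3 + γ₃ * ω 2 + γ₄ * ω 1) * Real.exp (-3 * h * lam)) :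
    0 ≤ g₄ := by
  have h1 : ω 1 = -α := by
    rw [hω]; simp [Finset.prod_range_succ, Nat.factorial]
  have h2 : ω 2 = α * (α - 1) / 2 := by
    rw [hω]; simp [Finset.prod_range_succ, Nat.factorial]; try ring
  have h3 : ω 3 = -(α * (α - 1) * (α - 2)) / 6 := by
    rw [hω]; simp [Finset.prod_range_succ, Nat.factorial]; try ring
  have h4 : ω 4 = α * (α - 1) * (α - 2) * (α - 3) / 24 := by
    rw [hω]; simp [Finset.prod_range_succ, Nat.factorial]; try ring
  have hD : (0:ℝ) < α ^ 3 + 6 * α ^ 2 + 11 * α + 6 := by nlinarith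
  have hN : γ₄ * (α ^ 3 + 6 * α ^ 2 + 11 * α + 6) ≤
      α ^ 5 / 8 + 11 * α ^ 4 / 24 - 41 * α ^ 3 / 24 - 107 * α ^ 2 / 24 + 163 * α / 12 - 8 :=
    (le_div_iff₀ hD).mp hγ₄
  have key : 0 ≤ α * ((α ^ 5 / 8 + 11 * α ^ 4 / 24 - 41 * α ^ 3 / 24 - 107 * α ^ 2 / 24 +
      163 * α / 12 - 8) - γ₄ * (α ^ 3 + 6 * α ^ 2 + 11 * α + 6)) :=
    mul_nonneg (by linarith) (by linarith)
  have hbr : γ₁ * ω 4 + γ₂ * ω 3 + γ₃ * ω 2 + γ₄ * ω 1 =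
      α * ((α ^ 5 / 8 + 11 * α ^ 4 / 24 - 41 * α ^ 3 / 24 - 107 * α ^ 2 / 24 +
      163 * α / 12 - 8) - γ₄ * (α ^ 3 + 6 * α ^ 2 + 11 * α + 6)) / 24 := by
    rw [h1, h2, h3, h4, hγ₁, hγ₂, hγ₃]; ring
  rw [hg4, hbr]
  exact mul_nonneg (by linarith) (Real.exp_nonneg _)
end

section
/- For every real α with 1.26 < α < 1.71, the cubic function g(x) = −x³ + (α²/2 + 5α/2 + 5)x² − (α⁴/8 + 13α³/12 + 31α²/8 + 83α/12 + 6)x + (α⁵/8 + 23α⁴/24 + 21α³/8 + 73α²/24 + 5α/4) is monotonically decreasing on the interval [5, ∞); consequently, for every real x ≥ 5, g(x) ≤ g(5) = α⁵/8 + α⁴/3 − 67α³/24 − 23α²/6 + 175α/6 − 30. -/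
lemma cubic_quad_nonneg (α a b : ℝ) (h1 : 1.26 < α) (h2 : α < 1.71)
    (ha : 5 ≤ a) (hb : 5 ≤ b) :
    0 ≤ a ^ 2 + a * b + b ^ 2 - (α ^ 2 / 2 + 5 * α / 2 + 5) * (a + b)
        + (α ^ 4 / 8 + 13 * α ^ 3 / 12 + 31 * α ^ 2 / 8 + 83 * α / 12 + 6) := by
  nlinarith [mul_nonneg (by linarith : (0:ℝ) ≤ a - 5) (by linarith : (0:ℝ) ≤ b - 5),
    sq_nonneg (a - 5), sq_nonneg (b - 5),
    mul_nonneg (by linarith : (0:ℝ) ≤ a - 5) (by nlinarith : (0:ℝ) ≤ 15 - (α ^ 2 / 2 + 5 * α / 2)),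
    mul_nonneg (by linarith : (0:ℝ) ≤ b - 5) (by nlinarith : (0:ℝ) ≤ 15 - (α ^ 2 / 2 + 5 * α / 2)),
    sq_nonneg (α - 1.5), sq_nonneg (α^2 - 2), mul_pos (by linarith : (0:ℝ) < α) (pow_pos (by linarith : (0:ℝ) < α) 3)]

lemma cubic_key (α a b : ℝ) (h1 : 1.26 < α) (h2 : α < 1.71)
    (ha : 5 ≤ a) (hab : a ≤ b) :
    -b ^ 3 + (α ^ 2 / 2 + 5 * α / 2 + 5) * b ^ 2
        - (α ^ 4 / 8 + 13 * α ^ 3 / 12 + 31 * α ^ 2 / 8 + 83 * α / 12 + 6) * b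
        + (α ^ 5 / 8 + 23 * α ^ 4 / 24 + 21 * α ^ 3 / 8 + 73 * α ^ 2 / 24 + 5 * α / 4)
      ≤ -a ^ 3 + (α ^ 2 / 2 + 5 * α / 2 + 5) * a ^ 2
        - (α ^ 4 / 8 + 13 * α ^ 3 / 12 + 31 * α ^ 2 / 8 + 83 * α / 12 + 6) * a
        + (α ^ 5 / 8 + 23 * α ^ 4 / 24 + 21 * α ^ 3 / 8 + 73 * α ^ 2 / 24 + 5 * α / 4) := by
  have hb : (5:ℝ) ≤ b := le_trans ha hab
  have hQ := cubic_quad_nonneg α a b h1 h2 ha hb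
  nlinarith [mul_nonneg (sub_nonneg.2 hab) hQ]

/-- the cubic `g` is monotonically decreasing on `[5, ∞)`; consequently
`g x ≤ g 5` for `x ≥ 5`, and `g 5 = α⁵/8 + α⁴/3 − 67α³/24 − 23α²/6 + 175α/6 − 30`. -/
theorem cubic_antitone_on_Ici_five (α : ℝ) (h1 : 1.26 < α) (h2 : α < 1.71)
    (g : ℝ → ℝ)
    (hg : ∀ x : ℝ, g x =
      -x ^ 3 + (α ^ 2 / 2 + 5 * α / 2 + 5) * x ^ 2
        - (α ^ 4 / 8 + 13 * α ^ 3 / 12 + 31 * α ^ 2 / 8 + 83 * α / 12 + 6) * x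
        + (α ^ 5 / 8 + 23 * α ^ 4 / 24 + 21 * α ^ 3 / 8 + 73 * α ^ 2 / 24 + 5 * α / 4)) :
    AntitoneOn g (Set.Ici (5 : ℝ)) ∧
      (∀ x : ℝ, 5 ≤ x → g x ≤ g 5) ∧
      g 5 = α ^ 5 / 8 + α ^ 4 / 3 - 67 * α ^ 3 / 24 - 23 * α ^ 2 / 6 + 175 * α / 6 - 30 := by
  refine ⟨?_, ?_, ?_⟩
  · intro a ha b hb hab
    rw [hg a, hg b]
    exact cubic_key α a b h1 h2 ha hab
  · intro x hx
    rw [hg x, hg 5]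
    exact cubic_key α 5 x h1 h2 le_rfl hx
  · rw [hg 5]; ring
end

section
/- The function h(x) = −eˣ + 3 − 3e^{−x} + e^{−2x} is monotonically decreasing on [0, ∞), and consequently h(x) ≤ h(0) = 0 for every real x ≥ 0. -/
/-! Since `eˣ · e⁻ˣ = 1`, the function factors as `h(x) = -(eˣ - 1)(1 - e⁻ˣ)²`. On `[0, ∞)` both
factors `eˣ - 1` and `1 - e⁻ˣ` are nonnegative and increasing, so their product is increasing and
nonnegative, and it vanishes at `0`. -/

open Real Set

lemma Real.exp_sub_one_mul_one_sub_exp_neg_sq (x : ℝ) :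
    (exp x - 1) * (1 - exp (-x)) ^ 2 = exp x - 3 + 3 * exp (-x) - exp (-2 * x) := by
  have hinv : exp x * exp (-x) = 1 := by rw [← exp_add, add_neg_cancel, exp_zero]
  have hsq : exp (-2 * x) = exp (-x) ^ 2 := by rw [← exp_nat_mul]; ring_nf
  rw [hsq]
  linear_combination (exp (-x) - 2) * hinv

lemma Real.exp_sub_one_mul_one_sub_exp_neg_sq_nonneg {x : ℝ} (hx : 0 ≤ x) :
    0 ≤ (exp x - 1) * (1 - exp (-x)) ^ 2 :=
  mul_nonneg (sub_nonneg.2 (one_le_exp hx)) (sq_nonneg _)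

lemma Real.monotoneOn_exp_sub_one_mul_one_sub_exp_neg_sq :
    MonotoneOn (fun x ↦ (exp x - 1) * (1 - exp (-x)) ^ 2) (Ici 0) := by
  intro x hx y hy hxy
  have hx' : 0 ≤ 1 - exp (-x) := sub_nonneg.2 (exp_le_one_iff.2 (neg_nonpos.2 hx))
  have hexp : exp x - 1 ≤ exp y - 1 := sub_le_sub_right (exp_le_exp.2 hxy) 1
  have hexp_neg : 1 - exp (-x) ≤ 1 - exp (-y) :=
    sub_le_sub_left (exp_le_exp.2 (neg_le_neg hxy)) 1
  exact mul_le_mul hexp (pow_le_pow_left₀ hx' hexp_neg 2) (sq_nonneg _)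
    (sub_nonneg.2 (one_le_exp hy))

/-- `h(x) = −eˣ + 3 − 3e^{−x} + e^{−2x}` is monotonically decreasing on
`[0,∞)`, and consequently `h x ≤ h 0 = 0` for `x ≥ 0`. -/
theorem aux_function_antitone_nonpos (f : ℝ → ℝ)
    (hf : ∀ x : ℝ, f x = -Real.exp x + 3 - 3 * Real.exp (-x) + Real.exp (-2 * x)) :
    AntitoneOn f (Set.Ici (0 : ℝ)) ∧ (∀ x : ℝ, 0 ≤ x → f x ≤ 0) ∧ f 0 = 0 := by
  have hfactor : f = fun x ↦ -((exp x - 1) * (1 - exp (-x)) ^ 2) := by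
    ext x
    rw [hf, exp_sub_one_mul_one_sub_exp_neg_sq]
    ring
  subst hfactor
  refine ⟨monotoneOn_exp_sub_one_mul_one_sub_exp_neg_sq.neg, fun x hx ↦ ?_, by simp⟩
  exact neg_nonpos.2 (exp_sub_one_mul_one_sub_exp_neg_sq_nonneg hx)
end

section
/- Let α ∈ (1,2), h > 0, λ > 0, and let γ₄ be real with γ₄ ≤ 0. Then φ(λ) = (γ₁e^{hλ} + γ₂ + γ₃e^{−hλ} + γ₄e^{−2hλ})(1 − e^{−hλ})^α > 0, where γ₁ = α²/8 + 5α/24 − γ₄, γ₂ = −α²/4 + α/12 + 1 + 3γ₄, γ₃ = α²/8 − 7α/24 − 3γ₄. Equivalently, since γ₁e^{x} + γ₂ + γ₃e^{−x} + γ₄e^{−2x} = (α²/8)(eˣ + e^{−x} − 2) + (α/24)(5eˣ − 7e^{−x} + 2) + 1 + γ₄(−eˣ + 3 − 3e^{−x} + e^{−2x}) with x = hλ, the first factor is strictly positive for x ≥ 0 and γ₄ ≤ 0. -/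
/-- for `α ∈ (1,2)`, `h > 0`, `λ > 0` and `γ₄ ≤ 0`, one has
`φ(λ) = (γ₁e^{hλ} + γ₂ + γ₃e^{−hλ} + γ₄e^{−2hλ})(1 − e^{−hλ})^α > 0`; also the first
factor `γ₁eˣ + γ₂ + γ₃e^{−x} + γ₄e^{−2x}` is strictly positive for every `x ≥ 0`. -/
theorem phi_pos (α lam h γ₁ γ₂ γ₃ γ₄ : ℝ) (hα1 : 1 < α) (hα2 : α < 2)
    (hh : 0 < h) (hlam : 0 < lam) (hγ₄ : γ₄ ≤ 0)
    (hγ₁ : γ₁ = α ^ 2 / 8 + 5 * α / 24 - γ₄)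
    (hγ₂ : γ₂ = -α ^ 2 / 4 + α / 12 + 1 + 3 * γ₄)
    (hγ₃ : γ₃ = α ^ 2 / 8 - 7 * α / 24 - 3 * γ₄) :
    (∀ x : ℝ, 0 ≤ x →
      0 < γ₁ * Real.exp x + γ₂ + γ₃ * Real.exp (-x) + γ₄ * Real.exp (-2 * x)) ∧
    0 < (γ₁ * Real.exp (h * lam) + γ₂ + γ₃ * Real.exp (-(h * lam)) +
          γ₄ * Real.exp (-2 * (h * lam))) * (1 - Real.exp (-(h * lam))) ^ α := by
  have key : ∀ x : ℝ, 0 ≤ x →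
      0 < γ₁ * Real.exp x + γ₂ + γ₃ * Real.exp (-x) + γ₄ * Real.exp (-2 * x) := by
    intro x hx
    set t := Real.exp x with ht
    have ht1 : 1 ≤ t := Real.one_le_exp hx
    have htpos : 0 < t := lt_of_lt_of_le one_pos ht1
    have hu : Real.exp (-x) = t⁻¹ := Real.exp_neg x
    have hv : Real.exp (-2 * x) = (t⁻¹) ^ 2 := by
      rw [show (-2 : ℝ) * x = (-x) + (-x) by ring, Real.exp_add, hu]; ring
    rw [hu, hv]
    have hB : 0 < γ₁ * t ^ 3 + γ₂ * t ^ 2 + γ₃ * t + γ₄ := by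
      have hBeq : γ₁ * t ^ 3 + γ₂ * t ^ 2 + γ₃ * t + γ₄ =
          (α ^ 2 / 8) * t * (t - 1) ^ 2 + (α / 24) * t * (5 * t + 7) * (t - 1)
            + t ^ 2 + (-γ₄) * (t - 1) ^ 3 := by
        rw [hγ₁, hγ₂, hγ₃]; ring
      have h1 : 0 ≤ (α ^ 2 / 8) * t * (t - 1) ^ 2 := by positivity
      have h2 : 0 ≤ (α / 24) * t * (5 * t + 7) * (t - 1) := by
        apply mul_nonneg
        · apply mul_nonneg
          · apply mul_nonneg <;> linarith
          · linarith
        · linarith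
      have h3 : 0 ≤ (-γ₄) * (t - 1) ^ 3 := by
        apply mul_nonneg (by linarith)
        have : 0 ≤ t - 1 := by linarith
        positivity
      have h4 : 0 < t ^ 2 := pow_pos htpos 2
      linarith [hBeq ▸ (by linarith : (0 : ℝ) < (α ^ 2 / 8) * t * (t - 1) ^ 2
        + (α / 24) * t * (5 * t + 7) * (t - 1) + t ^ 2 + (-γ₄) * (t - 1) ^ 3)]
    have heq : γ₁ * t + γ₂ + γ₃ * t⁻¹ + γ₄ * (t⁻¹) ^ 2 =
        (γ₁ * t ^ 3 + γ₂ * t ^ 2 + γ₃ * t + γ₄) / t ^ 2 := by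
      field_simp
    rw [heq]
    exact div_pos hB (pow_pos htpos 2)
  refine ⟨key, mul_pos (key _ (le_of_lt (mul_pos hh hlam))) ?_⟩
  apply Real.rpow_pos_of_pos
  have : Real.exp (-(h * lam)) < 1 := by
    rw [Real.exp_lt_one_iff]
    nlinarith
  linarith
end

section
/- Let M be a real n × n matrix whose symmetric part (M + Mᵀ)/2 is negative definite (i.e. xᵀMx < 0 for every nonzero real vector x). Then I − M is invertible, and every complex eigenvalue ν of the matrix (I − M)⁻¹(I + M) satisfies |ν| < 1. -/
/-!
If `(1 + A) z = ν (1 - A) z` with `z ≠ 0`, pairing with `z` gives `s + a = ν (s - a)` for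
`s = z* z > 0` and `a = z* A z`. Since `Re a < 0`, the point `s + a` is strictly closer to the
origin than its reflection `s - a`, hence `|ν| < 1`. For a real matrix `M` and `z = x + i y`,
`Re (z* M z) = xᵀ M x + yᵀ M y`, so negativity passes from real to complex vectors.
-/

open Matrix RCLike
open scoped ComplexOrder

theorem RCLike.norm_add_lt_norm_sub_of_re_neg {𝕜 : Type*} [RCLike 𝕜] {s a : 𝕜} (hs : 0 < s)
    (ha : re a < 0) : ‖s + a‖ < ‖s - a‖ := by
  obtain ⟨hs_re, hs_im⟩ := pos_iff.mp hs
  rw [← sq_lt_sq₀ (norm_nonneg _) (norm_nonneg _), norm_sq_eq_def, norm_sq_eq_def]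
  simp only [map_add, map_sub, hs_im]
  nlinarith

namespace Matrix

variable {n : Type*} [Fintype n]

theorem re_star_dotProduct_map_ofReal_mulVec (M : Matrix n n ℝ) (z : n → ℂ) :
    (star z ⬝ᵥ M.map (algebraMap ℝ ℂ) *ᵥ z).re =
      (fun i ↦ (z i).re) ⬝ᵥ M *ᵥ (fun i ↦ (z i).re) +
        (fun i ↦ (z i).im) ⬝ᵥ M *ᵥ (fun i ↦ (z i).im) := by
  simp only [dotProduct, mulVec, Complex.re_sum, Finset.mul_sum, ← Finset.sum_add_distrib]
  refine Finset.sum_congr rfl fun i _ ↦ Finset.sum_congr rfl fun j _ ↦ ?_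
  simp

theorem re_star_dotProduct_map_ofReal_mulVec_neg {M : Matrix n n ℝ}
    (hM : ∀ x : n → ℝ, x ≠ 0 → x ⬝ᵥ M *ᵥ x < 0) {z : n → ℂ} (hz : z ≠ 0) :
    (star z ⬝ᵥ M.map (algebraMap ℝ ℂ) *ᵥ z).re < 0 := by
  have hle (x : n → ℝ) : x ⬝ᵥ M *ᵥ x ≤ 0 := by
    rcases eq_or_ne x 0 with rfl | hx
    · simp
    · exact (hM x hx).le
  rw [re_star_dotProduct_map_ofReal_mulVec]
  by_cases hre : (fun i ↦ (z i).re) = 0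
  · have him : (fun i ↦ (z i).im) ≠ 0 := fun him ↦
      hz (funext fun i ↦ Complex.ext (congrFun hre i) (congrFun him i))
    linarith [hle fun i ↦ (z i).re, hM _ him]
  · linarith [hM _ hre, hle fun i ↦ (z i).im]

variable [DecidableEq n]

theorem map_nonsing_inv {K L : Type*} [Field K] [Field L] (f : K →+* L) (A : Matrix n n K) :
    A⁻¹.map f = (A.map f)⁻¹ := by
  simp only [← f.mapMatrix_apply]
  by_cases hA : IsUnit A.det
  · refine (inv_eq_left_inv ?_).symm
    rw [← _root_.map_mul, nonsing_inv_mul _ hA, _root_.map_one]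
  · have hfA : ¬IsUnit (f.mapMatrix A).det := by rwa [← f.map_det, isUnit_map_iff]
    rw [nonsing_inv_apply_not_isUnit _ hA, nonsing_inv_apply_not_isUnit _ hfA, _root_.map_zero]

noncomputable def cayley {K : Type*} [Field K] (A : Matrix n n K) : Matrix n n K :=
  (1 - A)⁻¹ * (1 + A)

theorem map_cayley {K L : Type*} [Field K] [Field L] (f : K →+* L) (A : Matrix n n K) :
    (cayley A).map f = cayley (A.map f) := by
  rw [cayley, cayley, Matrix.map_mul, map_nonsing_inv]
  simp only [← f.mapMatrix_apply, _root_.map_sub, _root_.map_add, _root_.map_one]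

theorem exists_mulVec_eq_smul_of_mem_spectrum {K : Type*} [Field K] {A : Matrix n n K} {ν : K}
    (hν : ν ∈ spectrum K A) : ∃ z ≠ 0, A *ᵥ z = ν • z := by
  rw [← spectrum_toLin', ← Module.End.hasEigenvalue_iff_mem_spectrum] at hν
  obtain ⟨z, hz⟩ := hν.exists_hasEigenvector
  exact ⟨z, hz.2, by simpa using hz.apply_eq_smul⟩

variable {𝕜 : Type*} [RCLike 𝕜]

theorem isUnit_one_sub_of_re_dotProduct_mulVec_neg {A : Matrix n n 𝕜}
    (hA : ∀ z : n → 𝕜, z ≠ 0 → re (star z ⬝ᵥ A *ᵥ z) < 0) : IsUnit (1 - A) := by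
  rw [isUnit_iff_isUnit_det, isUnit_iff_ne_zero]
  intro hdet
  obtain ⟨z, hz, hz0⟩ := exists_mulVec_eq_zero_iff.mpr hdet
  have hAz : A *ᵥ z = z := by
    rw [sub_mulVec, one_mulVec, sub_eq_zero] at hz0
    exact hz0.symm
  have hneg := hA z hz
  rw [hAz] at hneg
  exact hneg.not_ge (nonneg_iff.mp (dotProduct_star_self_nonneg z)).1

theorem spectrum_cayley_subset_ball {A : Matrix n n 𝕜}
    (hA : ∀ z : n → 𝕜, z ≠ 0 → re (star z ⬝ᵥ A *ᵥ z) < 0) :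
    spectrum 𝕜 (cayley A) ⊆ Metric.ball 0 1 := by
  intro ν hν
  obtain ⟨z, hz, hCz⟩ := exists_mulVec_eq_smul_of_mem_spectrum hν
  have hdet : IsUnit (1 - A).det :=
    (isUnit_iff_isUnit_det _).mp (isUnit_one_sub_of_re_dotProduct_mulVec_neg hA)
  have heig : (1 + A) *ᵥ z = ν • ((1 - A) *ᵥ z) := by
    rw [← mulVec_smul, ← hCz, mulVec_mulVec, cayley, mul_nonsing_inv_cancel_left _ _ hdet]
  have hsa : star z ⬝ᵥ z + star z ⬝ᵥ A *ᵥ z = ν * (star z ⬝ᵥ z - star z ⬝ᵥ A *ᵥ z) := by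
    simpa only [add_mulVec, sub_mulVec, one_mulVec, dotProduct_add, dotProduct_sub,
      dotProduct_smul, smul_eq_mul] using congrArg (star z ⬝ᵥ ·) heig
  have hlt := norm_add_lt_norm_sub_of_re_neg (dotProduct_star_self_pos_iff.mpr hz) (hA z hz)
  rw [hsa, norm_mul] at hlt
  rw [mem_ball_zero_iff]
  exact (mul_lt_iff_lt_one_left ((by positivity : (0 : ℝ) ≤ _).trans_lt hlt)).mp hlt

end Matrix

/-- if the symmetric part of a real matrix `M` is negative definite, then
`I − M` is invertible and every complex eigenvalue of `(I − M)⁻¹(I + M)` has modulus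
less than one. -/
theorem cayley_transform_spectrum_lt_one (n : ℕ) (M : Matrix (Fin n) (Fin n) ℝ)
    (hM : ∀ x : Fin n → ℝ, x ≠ 0 → dotProduct x (M.mulVec x) < 0) :
    IsUnit (1 - M) ∧
      ∀ ν ∈ spectrum ℂ (((1 - M)⁻¹ * (1 + M)).map (algebraMap ℝ ℂ)),
        ‖ν‖ < 1 := by
  refine ⟨isUnit_one_sub_of_re_dotProduct_mulVec_neg (by simpa using hM), fun ν hν ↦ ?_⟩
  change ν ∈ spectrum ℂ ((cayley M).map (algebraMap ℝ ℂ)) at hν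
  rw [map_cayley] at hν
  exact mem_ball_zero_iff.mp
    (spectrum_cayley_subset_ball (fun z hz ↦ re_star_dotProduct_map_ofReal_mulVec_neg hM hz) hν)
end

section
/- (Grenander–Szegő) Let f : ℝ → ℝ be a continuous 2π-periodic real-valued function, and for each integer k let t_k = (1/2π)∫_{−π}^{π} f(x) e^{−ikx} dx be its k-th Fourier coefficient. For n ≥ 1 let T_n be the n × n Toeplitz matrix with entries (T_n)_{j,l} = t_{j−l} for 1 ≤ j, l ≤ n. Then T_n is Hermitian, and every eigenvalue μ of T_n satisfies f_min ≤ μ ≤ f_max, where f_min and f_max are the minimum and maximum values of f. Moreover, if f_min < f_max, then f_min < μ < f_max for every eigenvalue μ and every n ≥ 1; and if f_min ≥ 0 and f_min < f_max, then T_n is positive definite. -/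
/-!
With `p_v(x) = ∑ₗ vₗ e^{ilx}`, the quadratic form of the Toeplitz matrix is
`v* Tₙ(f) v = (1/2π) ∫_{-π}^{π} f |p_v|²`. Since `Tₙ` is linear in the symbol and `Tₙ(c) = c I`,
the matrices `Tₙ(f) - f_min I = Tₙ(f - f_min)` and `f_max I - Tₙ(f) = Tₙ(f_max - f)` are positive
semidefinite, which confines the spectrum to `[f_min, f_max]`. They are even positive definite when
`f` is not constant: `p_v` is a polynomial in `e^{ix}`, so for `v ≠ 0` it has only finitely many
zeros in a period, and the continuous integrand `(f - f_min) |p_v|² ≥ 0` is positive somewhere.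
-/

open Complex Matrix Set Topology
open scoped ComplexOrder ComplexConjugate Real

noncomputable section

def fourierCoeffPi (f : ℝ → ℂ) (k : ℤ) : ℂ :=
  (1 / (2 * π)) * ∫ x in -π..π, f x * exp (-I * k * x)

def toeplitz (f : ℝ → ℂ) (n : ℕ) : Matrix (Fin n) (Fin n) ℂ :=
  of fun j l => fourierCoeffPi f ((j : ℤ) - l)

def trigPoly {n : ℕ} (v : Fin n → ℂ) (x : ℝ) : ℂ :=
  ∑ l, v l * exp (x * I) ^ (l : ℕ)

end

theorem integral_exp_neg_I_int_mul (k : ℤ) :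
    ∫ x in -π..π, exp (-I * k * x) = if k = 0 then (2 * π : ℂ) else 0 := by
  split_ifs with hk
  · simp [hk, two_mul]
  have hc : -I * k ≠ 0 := by simp [I_ne_zero, hk]
  have hper : exp (-I * k * π) = exp (-I * k * (-π : ℝ)) :=
    exp_eq_exp_iff_exists_int.2 ⟨-k, by push_cast; ring⟩
  rw [integral_exp_mul_complex hc, hper, sub_self, zero_div]

theorem fourierCoeffPi_const (c : ℂ) (k : ℤ) :
    fourierCoeffPi (fun _ => c) k = if k = 0 then c else 0 := by
  rw [fourierCoeffPi, intervalIntegral.integral_const_mul, integral_exp_neg_I_int_mul]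
  split_ifs
  · field_simp
  · simp

theorem fourierCoeffPi_sub {f g : ℝ → ℂ} (hf : Continuous f) (hg : Continuous g) (k : ℤ) :
    fourierCoeffPi (fun x => f x - g x) k = fourierCoeffPi f k - fourierCoeffPi g k := by
  simp only [fourierCoeffPi, sub_mul]
  rw [intervalIntegral.integral_sub ((by fun_prop : Continuous _).intervalIntegrable _ _)
    ((by fun_prop : Continuous _).intervalIntegrable _ _), mul_sub]

theorem star_fourierCoeffPi_ofReal (f : ℝ → ℝ) (k : ℤ) :
    star (fourierCoeffPi (fun x => f x) k) = fourierCoeffPi (fun x => f x) (-k) := by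
  rw [fourierCoeffPi, fourierCoeffPi, star_mul', Complex.star_def,
    ← intervalIntegral.intervalIntegral_conj]
  congr 1
  · simp [map_ofNat]
  · refine intervalIntegral.integral_congr fun x _ => ?_
    simp [← Complex.exp_conj]

theorem toeplitz_const (c : ℂ) (n : ℕ) : toeplitz (fun _ => c) n = c • 1 := by
  ext j l
  simp [toeplitz, fourierCoeffPi_const, one_apply, sub_eq_zero, Fin.ext_iff]

theorem toeplitz_sub {f g : ℝ → ℂ} (hf : Continuous f) (hg : Continuous g) (n : ℕ) :
    toeplitz (fun x => f x - g x) n = toeplitz f n - toeplitz g n := by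
  ext j l
  simp [toeplitz, fourierCoeffPi_sub hf hg]

theorem isHermitian_toeplitz_ofReal (f : ℝ → ℝ) (n : ℕ) :
    (toeplitz (fun x => f x) n).IsHermitian := by
  ext j l
  rw [conjTranspose_apply, toeplitz, of_apply, of_apply, star_fourierCoeffPi_ofReal, neg_sub]

theorem exp_neg_I_sub_mul_eq_conj_pow_mul_pow (j l : ℕ) (x : ℝ) :
    exp (-I * ((j : ℤ) - l : ℤ) * x) = conj (exp (x * I) ^ j) * exp (x * I) ^ l := by
  rw [map_pow, ← Complex.exp_conj, ← exp_nat_mul, ← exp_nat_mul, ← exp_add]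
  congr 1
  simp only [map_mul, conj_ofReal, conj_I]
  push_cast
  ring

theorem normSq_trigPoly {n : ℕ} (v : Fin n → ℂ) (x : ℝ) :
    (normSq (trigPoly v x) : ℂ) =
      ∑ j, ∑ l, conj (v j) * v l * (conj (exp (x * I) ^ (j : ℕ)) * exp (x * I) ^ (l : ℕ)) := by
  rw [normSq_eq_conj_mul_self, trigPoly, map_sum, Finset.sum_mul_sum]
  simp only [map_mul]
  exact Finset.sum_congr rfl fun j _ => Finset.sum_congr rfl fun l _ => by ring

theorem star_dotProduct_toeplitz_mulVec {f : ℝ → ℂ} (hf : Continuous f) {n : ℕ}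
    (v : Fin n → ℂ) :
    star v ⬝ᵥ (toeplitz f n *ᵥ v) =
      (1 / (2 * π)) * ∫ x in -π..π, f x * normSq (trigPoly v x) := by
  have hint {g : ℝ → ℂ} (hg : Continuous g) : IntervalIntegrable g MeasureTheory.volume (-π) π :=
    hg.intervalIntegrable _ _
  simp_rw [normSq_trigPoly, Finset.mul_sum]
  rw [intervalIntegral.integral_finsetSum fun j _ => hint (by fun_prop)]
  simp only [dotProduct, mulVec, Finset.mul_sum]
  refine Finset.sum_congr rfl fun j _ => ?_
  rw [intervalIntegral.integral_finsetSum fun l _ => hint (by fun_prop), Finset.mul_sum]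
  refine Finset.sum_congr rfl fun l _ => ?_
  simp_rw [toeplitz, of_apply, fourierCoeffPi, exp_neg_I_sub_mul_eq_conj_pow_mul_pow,
    mul_left_comm (f _), intervalIntegral.integral_const_mul, Pi.star_apply, RCLike.star_def]
  ring

theorem star_dotProduct_toeplitz_ofReal_mulVec {f : ℝ → ℝ} (hf : Continuous f) {n : ℕ}
    (v : Fin n → ℂ) :
    star v ⬝ᵥ (toeplitz (fun x => f x) n *ᵥ v) =
      ((1 / (2 * π) * ∫ x in -π..π, f x * normSq (trigPoly v x) : ℝ) : ℂ) := by
  rw [star_dotProduct_toeplitz_mulVec (by fun_prop)]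
  push_cast [← intervalIntegral.integral_ofReal]
  rfl

theorem trigPoly_eq_eval_ofFn {n : ℕ} (v : Fin n → ℂ) (x : ℝ) :
    trigPoly v x = (Polynomial.ofFn n v).eval (exp (x * I)) := by
  simp [trigPoly, Polynomial.ofFn_eq_sum_monomial, Polynomial.eval_finsetSum]

theorem eq_zero_of_trigPoly_eqOn_zero {n : ℕ} {v : Fin n → ℂ} {a b : ℝ} (hab : a < b)
    (h : EqOn (trigPoly v) 0 (Ioo a b)) : v = 0 := by
  set b' := min b (a + 2 * π)
  have hab' : a < b' := lt_min hab (by linarith [Real.pi_pos])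
  have hb' : b' ≤ a + 2 * π := min_le_right _ _
  have hinj : InjOn (fun x : ℝ => exp (x * I)) (Ioo a b') :=
    Subtype.val_injective.comp_injOn
      ((Circle.exp_injOn_Ico (by linarith)).mono Ioo_subset_Ico_self)
  have hroots :
      (fun x : ℝ => exp (x * I)) '' Ioo a b' ⊆ {z | (Polynomial.ofFn n v).IsRoot z} := by
    rintro _ ⟨x, hx, rfl⟩
    simpa [trigPoly_eq_eval_ofFn] using h ⟨hx.1, hx.2.trans_le (min_le_left _ _)⟩
  have hP := Polynomial.eq_zero_of_infinite_isRoot _ (((Ioo_infinite hab').image hinj).mono hroots)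
  exact Polynomial.injective_ofFn n (hP.trans (Polynomial.ofFn_zero n).symm)

theorem frequently_trigPoly_ne_zero {n : ℕ} {v : Fin n → ℂ} (hv : v ≠ 0) (y : ℝ) :
    ∃ᶠ x in 𝓝[>] y, trigPoly v x ≠ 0 := fun h => by
  obtain ⟨b, hb, hsub⟩ := mem_nhdsGT_iff_exists_Ioo_subset.1 h
  exact hv (eq_zero_of_trigPoly_eqOn_zero hb fun x hx => not_not.1 (hsub hx))

theorem integral_mul_normSq_trigPoly_pos {φ : ℝ → ℝ} (hφ : Continuous φ)
    (hper : Function.Periodic φ (2 * π)) (h0 : ∀ x, 0 ≤ φ x) {y : ℝ} (hy : 0 < φ y)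
    {n : ℕ} {v : Fin n → ℂ} (hv : v ≠ 0) :
    0 < ∫ x in -π..π, φ x * normSq (trigPoly v x) := by
  obtain ⟨y', hy'mem, hy'⟩ := hper.exists_mem_Ico Real.two_pi_pos y (-π)
  rw [hy'] at hy
  rw [show -π + 2 * π = π by ring] at hy'mem
  have hev : ∀ᶠ x in 𝓝[>] y', y' < x ∧ x < π ∧ 0 < φ x :=
    eventually_mem_nhdsWithin.and (nhdsWithin_le_nhds
      ((eventually_lt_nhds hy'mem.2).and (hφ.continuousAt.eventually (lt_mem_nhds hy))))
  obtain ⟨x, hne, hyx, hxπ, hφx⟩ := ((frequently_trigPoly_ne_zero hv y').and_eventually hev).exists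
  have hcont : Continuous fun x => φ x * normSq (trigPoly v x) := by
    unfold trigPoly; fun_prop
  exact intervalIntegral.integral_pos (by linarith [Real.pi_pos]) hcont.continuousOn
    (fun x _ => mul_nonneg (h0 x) (normSq_nonneg _))
    ⟨x, ⟨by linarith [hy'mem.1], hxπ.le⟩, mul_pos hφx (normSq_pos.2 hne)⟩

theorem posSemidef_toeplitz {φ : ℝ → ℝ} (hφ : Continuous φ) (h0 : ∀ x, 0 ≤ φ x) (n : ℕ) :
    (toeplitz (fun x => φ x) n).PosSemidef := by
  refine .of_dotProduct_mulVec_nonneg (isHermitian_toeplitz_ofReal φ n) fun v => ?_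
  rw [star_dotProduct_toeplitz_ofReal_mulVec hφ, Complex.zero_le_real]
  exact mul_nonneg (by positivity) (intervalIntegral.integral_nonneg (by linarith [Real.pi_pos])
    fun x _ => mul_nonneg (h0 x) (normSq_nonneg _))

theorem posDef_toeplitz {φ : ℝ → ℝ} (hφ : Continuous φ) (hper : Function.Periodic φ (2 * π))
    (h0 : ∀ x, 0 ≤ φ x) {y : ℝ} (hy : 0 < φ y) (n : ℕ) :
    (toeplitz (fun x => φ x) n).PosDef := by
  refine .of_dotProduct_mulVec_pos (isHermitian_toeplitz_ofReal φ n) fun v hv => ?_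
  rw [star_dotProduct_toeplitz_ofReal_mulVec hφ, Complex.zero_lt_real]
  exact mul_pos (by positivity) (integral_mul_normSq_trigPoly_pos hφ hper h0 hy hv)

theorem toeplitz_sub_smul_one {f : ℝ → ℂ} (hf : Continuous f) (c : ℂ) (n : ℕ) :
    toeplitz f n - c • 1 = toeplitz (fun x => f x - c) n := by
  rw [toeplitz_sub hf continuous_const, toeplitz_const]

theorem smul_one_sub_toeplitz {f : ℝ → ℂ} (hf : Continuous f) (c : ℂ) (n : ℕ) :
    c • 1 - toeplitz f n = toeplitz (fun x => c - f x) n := by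
  rw [toeplitz_sub continuous_const hf, toeplitz_const]

section Spectrum

variable {𝕜 ι : Type*} [RCLike 𝕜] [Fintype ι] [DecidableEq ι] {A : Matrix ι ι 𝕜} {μ : 𝕜}

theorem Matrix.PosSemidef.nonneg_of_mem_spectrum (hA : A.PosSemidef) (hμ : μ ∈ spectrum 𝕜 A) :
    0 ≤ μ :=
  (posSemidef_iff_isHermitian_and_spectrum_nonneg.1 hA).2 hμ

theorem Matrix.PosDef.pos_of_mem_spectrum (hA : A.PosDef) (hμ : μ ∈ spectrum 𝕜 A) : 0 < μ := by
  rw [hA.isHermitian.spectrum_eq_image_range] at hμ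
  obtain ⟨_, ⟨i, rfl⟩, rfl⟩ := hμ
  exact RCLike.ofReal_pos.2 (hA.eigenvalues_pos i)

end Spectrum

theorem spectrum.sub_mem_sub_smul_one {R A : Type*} [CommRing R] [Ring A] [Algebra R A] {a : A}
    {μ : R} (hμ : μ ∈ spectrum R a) (c : R) : μ - c ∈ spectrum R (a - c • 1) := by
  rw [← Algebra.algebraMap_eq_smul_one, ← spectrum.sub_singleton_eq]
  exact Set.sub_mem_sub hμ rfl

theorem spectrum.sub_mem_smul_one_sub {R A : Type*} [CommRing R] [Ring A] [Algebra R A] {a : A}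
    {μ : R} (hμ : μ ∈ spectrum R a) (c : R) : c - μ ∈ spectrum R (c • 1 - a) := by
  rw [← Algebra.algebraMap_eq_smul_one, ← spectrum.singleton_sub_eq]
  exact Set.sub_mem_sub rfl hμ

section ToeplitzSpectrum

variable {f : ℝ → ℝ} {n : ℕ} {μ : ℂ}

theorem ofReal_le_of_mem_spectrum_toeplitz (hf : Continuous f) {c : ℝ} (hc : ∀ x, c ≤ f x)
    (hμ : μ ∈ spectrum ℂ (toeplitz (fun x => f x) n)) : (c : ℂ) ≤ μ := by
  have hpsd := posSemidef_toeplitz (φ := fun x => f x - c) (by fun_prop)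
    (fun x => sub_nonneg.2 (hc x)) n
  push_cast at hpsd
  rw [← toeplitz_sub_smul_one (by fun_prop)] at hpsd
  exact sub_nonneg.1 (hpsd.nonneg_of_mem_spectrum (spectrum.sub_mem_sub_smul_one hμ _))

theorem le_ofReal_of_mem_spectrum_toeplitz (hf : Continuous f) {c : ℝ} (hc : ∀ x, f x ≤ c)
    (hμ : μ ∈ spectrum ℂ (toeplitz (fun x => f x) n)) : μ ≤ c := by
  have hpsd := posSemidef_toeplitz (φ := fun x => c - f x) (by fun_prop)
    (fun x => sub_nonneg.2 (hc x)) n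
  push_cast at hpsd
  rw [← smul_one_sub_toeplitz (by fun_prop)] at hpsd
  exact sub_nonneg.1 (hpsd.nonneg_of_mem_spectrum (spectrum.sub_mem_smul_one_sub hμ _))

theorem ofReal_lt_of_mem_spectrum_toeplitz (hf : Continuous f) (hper : Function.Periodic f (2 * π))
    {c : ℝ} (hc : ∀ x, c ≤ f x) {y : ℝ} (hy : c < f y)
    (hμ : μ ∈ spectrum ℂ (toeplitz (fun x => f x) n)) : (c : ℂ) < μ := by
  have hpd := posDef_toeplitz (φ := fun x => f x - c) (by fun_prop) (fun x => by simp only [hper x])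
    (fun x => sub_nonneg.2 (hc x)) (sub_pos.2 hy) n
  push_cast at hpd
  rw [← toeplitz_sub_smul_one (by fun_prop)] at hpd
  exact sub_pos.1 (hpd.pos_of_mem_spectrum (spectrum.sub_mem_sub_smul_one hμ _))

theorem lt_ofReal_of_mem_spectrum_toeplitz (hf : Continuous f) (hper : Function.Periodic f (2 * π))
    {c : ℝ} (hc : ∀ x, f x ≤ c) {y : ℝ} (hy : f y < c)
    (hμ : μ ∈ spectrum ℂ (toeplitz (fun x => f x) n)) : μ < c := by
  have hpd := posDef_toeplitz (φ := fun x => c - f x) (by fun_prop) (fun x => by simp only [hper x])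
    (fun x => sub_nonneg.2 (hc x)) (sub_pos.2 hy) n
  push_cast at hpd
  rw [← smul_one_sub_toeplitz (by fun_prop)] at hpd
  exact sub_pos.1 (hpd.pos_of_mem_spectrum (spectrum.sub_mem_smul_one_sub hμ _))

end ToeplitzSpectrum

theorem grenander_szego_general (f : ℝ → ℝ) (hf : Continuous f)
    (hper : ∀ x : ℝ, f (x + 2 * Real.pi) = f x)
    (fmin fmax : ℝ) (hmin : IsLeast (Set.range f) fmin)
    (hmax : IsGreatest (Set.range f) fmax)
    (t : ℤ → ℂ)
    (ht : ∀ k : ℤ, t k = (1 / (2 * Real.pi)) *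
      ∫ x : ℝ in (-Real.pi)..Real.pi, ((f x : ℂ) * Complex.exp (-Complex.I * (k : ℂ) * (x : ℂ))))
    (n : ℕ)
    (T : Matrix (Fin n) (Fin n) ℂ)
    (hT : ∀ j l : Fin n, T j l = t ((j : ℤ) - (l : ℤ))) :
    T.IsHermitian ∧
    (∀ μ ∈ spectrum ℂ T, μ.im = 0 ∧ fmin ≤ μ.re ∧ μ.re ≤ fmax) ∧
    (fmin < fmax → ∀ μ ∈ spectrum ℂ T, fmin < μ.re ∧ μ.re < fmax) ∧
    (0 ≤ fmin → fmin < fmax → T.PosDef) := by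
  obtain rfl : T = toeplitz (fun x => f x) n := by
    ext j l
    rw [hT, ht]
    rfl
  have hfmin : ∀ x, fmin ≤ f x := fun x => hmin.2 ⟨x, rfl⟩
  have hfmax : ∀ x, f x ≤ fmax := fun x => hmax.2 ⟨x, rfl⟩
  obtain ⟨xmin, rfl⟩ := hmin.1
  obtain ⟨xmax, rfl⟩ := hmax.1
  refine ⟨isHermitian_toeplitz_ofReal f n, fun μ hμ => ?_, fun hlt μ hμ => ?_, fun h0 hlt => ?_⟩
  · obtain ⟨hlow, him⟩ := le_def.1 (ofReal_le_of_mem_spectrum_toeplitz hf hfmin hμ)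
    obtain ⟨hup, -⟩ := le_def.1 (le_ofReal_of_mem_spectrum_toeplitz hf hfmax hμ)
    exact ⟨by simpa using him.symm, by simpa using hlow, by simpa using hup⟩
  · obtain ⟨hlow, -⟩ := lt_def.1 (ofReal_lt_of_mem_spectrum_toeplitz hf hper hfmin hlt hμ)
    obtain ⟨hup, -⟩ := lt_def.1 (lt_ofReal_of_mem_spectrum_toeplitz hf hper hfmax hlt hμ)
    exact ⟨by simpa using hlow, by simpa using hup⟩
  · exact posDef_toeplitz hf hper (fun x => h0.trans (hfmin x)) (h0.trans_lt hlt) n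

/-- Grenander–Szegő: the Toeplitz matrix built from the Fourier
coefficients of a continuous `2π`-periodic real function `f` is Hermitian, its
eigenvalues are real and lie in `[f_min, f_max]`, strictly if `f_min < f_max`, and
`T_n` is positive definite whenever `f_min ≥ 0` and `f_min < f_max`. -/
theorem grenander_szego (f : ℝ → ℝ) (hf : Continuous f)
    (hper : ∀ x : ℝ, f (x + 2 * Real.pi) = f x)
    (fmin fmax : ℝ) (hmin : IsLeast (Set.range f) fmin)
    (hmax : IsGreatest (Set.range f) fmax)
    (t : ℤ → ℂ)
    (ht : ∀ k : ℤ, t k = (1 / (2 * Real.pi)) *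
      ∫ x : ℝ in (-Real.pi)..Real.pi, ((f x : ℂ) * Complex.exp (-Complex.I * (k : ℂ) * (x : ℂ))))
    (n : ℕ) (hn : 1 ≤ n)
    (T : Matrix (Fin n) (Fin n) ℂ)
    (hT : ∀ j l : Fin n, T j l = t ((j : ℤ) - (l : ℤ))) :
    T.IsHermitian ∧
    (∀ μ ∈ spectrum ℂ T, μ.im = 0 ∧ fmin ≤ μ.re ∧ μ.re ≤ fmax) ∧
    (fmin < fmax → ∀ μ ∈ spectrum ℂ T, fmin < μ.re ∧ μ.re < fmax) ∧
    (0 ≤ fmin → fmin < fmax → T.PosDef) :=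
  grenander_szego_general f hf hper fmin fmax hmin hmax t ht n T hT
end

section
/- Let α ∈ (1,2), m ≥ 1, and let p₁, …, p_m and γ₁, …, γ_m be real numbers satisfying the third-order conditions: ∑_{j=1}^m γ_j = 1, ∑_{j=1}^m γ_j(p_j − α/2) = 0, and ∑_{j=1}^m γ_j(p_j²/2 − αp_j/2 + α/6 + α(α−1)/8) = 0. Define W_p : ℝ → ℝ by W_p(z) = e^{pz}((1 − e^{−z})/z)^α for z ≠ 0 and W_p(0) = 1. Then ∑_{j=1}^m γ_j W_{p_j}(z) − 1 = O(z³) as z → 0. -/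
/-!
Second-order expansions `f z = a + b z + c z² + O(z³)` at `0` are stable under sums, scalar
multiples and composition with a function that has one itself. Since
`(1 - e^{-z})/z = 1 - z/2 + z²/6 + O(z³)`, writing `W_q(z) = exp (q z + α log ((1 - e^{-z})/z))`
and composing with the expansions of `log (1 + y)` and `exp y` gives
`W_q(z) = 1 + (q - α/2) z + ((q - α/2)²/2 + α/24) z² + O(z³)`. The three order conditions say
precisely that the `γ`-weighted sums of these coefficients are `1, 0, 0`.
-/

open Asymptotics Filter Topology Finset

def HasSecondOrderExpansion (l : Filter ℝ) (f : ℝ → ℝ) (a b c : ℝ) : Prop :=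
  (fun z => f z - (a + b * z + c * z ^ 2)) =O[l] fun z => z ^ 3

lemma isBigO_pow_pow_of_le {l : Filter ℝ} (hl : l ≤ 𝓝 0) {m n : ℕ} (h : m ≤ n) :
    (fun z : ℝ => z ^ n) =O[l] fun z => z ^ m := by
  rcases h.eq_or_lt with rfl | h
  · exact isBigO_refl _ _
  · exact (isLittleO_pow_pow h).isBigO.mono hl

namespace HasSecondOrderExpansion

variable {l : Filter ℝ} {f g : ℝ → ℝ} {a b c a' b' c' : ℝ}

theorem congr' (h : HasSecondOrderExpansion l f a b c) (hfg : f =ᶠ[l] g) :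
    HasSecondOrderExpansion l g a b c :=
  IsBigO.congr' h (hfg.sub EventuallyEq.rfl) EventuallyEq.rfl

theorem linear (b : ℝ) : HasSecondOrderExpansion l (fun z => b * z) 0 b 0 :=
  (isBigO_zero _ _).congr_left fun z => by ring

theorem add (hf : HasSecondOrderExpansion l f a b c) (hg : HasSecondOrderExpansion l g a' b' c') :
    HasSecondOrderExpansion l (fun z => f z + g z) (a + a') (b + b') (c + c') :=
  (IsBigO.add hf hg).congr_left fun z => by ring

theorem const_mul (k : ℝ) (hf : HasSecondOrderExpansion l f a b c) :
    HasSecondOrderExpansion l (fun z => k * f z) (k * a) (k * b) (k * c) :=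
  (IsBigO.const_mul_left hf k).congr_left fun z => by ring

theorem sum {ι : Type*} (s : Finset ι) {f : ι → ℝ → ℝ} {a b c : ι → ℝ}
    (h : ∀ i ∈ s, HasSecondOrderExpansion l (f i) (a i) (b i) (c i)) :
    HasSecondOrderExpansion l (fun z => ∑ i ∈ s, f i z)
      (∑ i ∈ s, a i) (∑ i ∈ s, b i) (∑ i ∈ s, c i) :=
  (IsBigO.sum h).congr_left fun z => by
    simp only [Finset.sum_apply, sum_sub_distrib, sum_add_distrib, sum_mul]

theorem sub_const_isBigO (hl : l ≤ 𝓝 0) (h : HasSecondOrderExpansion l f a b c) :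
    (fun z => f z - a) =O[l] fun z => z := by
  have hpoly : (fun z => b * z + c * z ^ 2) =O[l] fun z => z := by
    have hbdd : (fun z : ℝ => b + c * z) =O[l] fun _ => (1 : ℝ) :=
      ((by fun_prop : Continuous fun z : ℝ => b + c * z).tendsto 0).isBigO_one ℝ |>.mono hl
    exact ((isBigO_refl (fun z : ℝ => z) l).mul hbdd).congr (fun z => by ring) fun z => by simp
  have hrem : (fun z => f z - (a + b * z + c * z ^ 2)) =O[l] fun z => z :=
    IsBigO.trans h (by simpa using isBigO_pow_pow_of_le hl (by norm_num : 1 ≤ 3))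
  exact (hrem.add hpoly).congr_left fun z => by ring

theorem tendsto (hl : l ≤ 𝓝 0) (h : HasSecondOrderExpansion l f a b c) :
    Tendsto f l (𝓝 a) := by
  have := (h.sub_const_isBigO hl).trans_tendsto (tendsto_id.mono_left hl)
  simpa using this.add_const a

theorem sub_linear_isBigO (hl : l ≤ 𝓝 0) (h : HasSecondOrderExpansion l f a b c) :
    (fun z => f z - a - b * z) =O[l] fun z => z ^ 2 :=
  ((IsBigO.trans h (isBigO_pow_pow_of_le hl (by norm_num))).add
    ((isBigO_refl (fun z : ℝ => z ^ 2) l).const_mul_left c)).congr_left fun z => by ring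

theorem sq_sub_isBigO (hl : l ≤ 𝓝 0) (h : HasSecondOrderExpansion l f 0 b c) :
    (fun z => f z ^ 2 - b ^ 2 * z ^ 2) =O[l] fun z => z ^ 3 := by
  have hf : f =O[l] fun z => z := by simpa using h.sub_const_isBigO hl
  have hsum : (fun z => f z + b * z) =O[l] fun z => z :=
    hf.add ((isBigO_refl _ l).const_mul_left b)
  exact ((h.sub_linear_isBigO hl).mul hsum).congr (fun z => by ring) fun z => by ring

theorem comp (hl : l ≤ 𝓝 0) {F : ℝ → ℝ} {A B C : ℝ}
    (hF : HasSecondOrderExpansion (𝓝 0) (fun y => F (a + y)) A B C)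
    (hf : HasSecondOrderExpansion l f a b c) :
    HasSecondOrderExpansion l (fun z => F (f z)) A (B * b) (B * c + C * b ^ 2) := by
  have hy : HasSecondOrderExpansion l (fun z => f z - a) 0 b c :=
    IsBigO.congr_left hf fun z => by ring
  have hy₁ : (fun z => f z - a) =O[l] fun z => z := by simpa using hy.sub_const_isBigO hl
  have houter : (fun z => F (f z) - (A + B * (f z - a) + C * (f z - a) ^ 2)) =O[l]
      fun z => z ^ 3 := by
    have := (IsBigO.comp_tendsto hF (hy.tendsto hl)).trans (hy₁.pow 3)
    simpa [Function.comp_def] using this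
  exact ((houter.add (hy.const_mul_left B)).add ((hy.sq_sub_isBigO hl).const_mul_left C))
    |>.congr_left fun z => by ring

end HasSecondOrderExpansion

open HasSecondOrderExpansion Real

theorem hasSecondOrderExpansion_exp : HasSecondOrderExpansion (𝓝 0) exp 1 1 (1 / 2) :=
  (exp_sub_sum_range_isBigO_pow 3).congr_left fun z => by
    simp [sum_range_succ, Nat.factorial]
    ring

theorem hasSecondOrderExpansion_log_one_add :
    HasSecondOrderExpansion (𝓝 0) (fun y => log (1 + y)) 0 1 (-1 / 2) := by
  have hC := (Complex.log_sub_logTaylor_isBigO 2).comp_tendsto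
    (Complex.continuous_ofReal.tendsto' (0 : ℝ) 0 Complex.ofReal_zero)
  have hpos : ∀ᶠ y : ℝ in 𝓝 0, 0 ≤ 1 + y :=
    (eventually_ge_nhds (show (-1 : ℝ) < 0 by norm_num)).mono fun y hy => by linarith
  refine isBigO_norm_norm.1 ((isBigO_norm_norm.2 hC).congr' ?_ (.of_eq ?_))
  · filter_upwards [hpos] with y hy
    have : Complex.log (1 + y) - Complex.logTaylor (2 + 1) y
        = ((log (1 + y) - (0 + 1 * y + (-1 / 2) * y ^ 2) : ℝ) : ℂ) := by
      push_cast [Complex.ofReal_log hy]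
      simp [Complex.logTaylor_succ, Complex.logTaylor_zero]
      ring
    simp only [Function.comp_apply, this, Complex.norm_real]
  · ext y; simp

theorem hasSecondOrderExpansion_one_sub_exp_neg_div :
    HasSecondOrderExpansion (𝓝[≠] 0) (fun z => (1 - exp (-z)) / z) 1 (-1 / 2) (1 / 6) := by
  have h4 := ((exp_sub_sum_range_isBigO_pow 4).comp_tendsto
    (continuous_neg.tendsto' (0 : ℝ) 0 neg_zero)).mono (nhdsWithin_le_nhds (s := {0}ᶜ))
  refine (h4.mul (isBigO_refl (fun z : ℝ => z⁻¹) _)).neg_left.congr' ?_ ?_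
  · filter_upwards [self_mem_nhdsWithin] with z (hz : z ≠ 0)
    simp [sum_range_succ, Nat.factorial]
    field_simp
    ring
  · filter_upwards [self_mem_nhdsWithin] with z (hz : z ≠ 0)
    simp
    field_simp

theorem hasSecondOrderExpansion_exp_mul_rpow (α q : ℝ) :
    HasSecondOrderExpansion (𝓝[≠] 0) (fun z => exp (q * z) * ((1 - exp (-z)) / z) ^ α)
      1 (q - α / 2) ((q - α / 2) ^ 2 / 2 + α / 24) := by
  have hl : 𝓝[≠] (0 : ℝ) ≤ 𝓝 0 := nhdsWithin_le_nhds
  have hg := hasSecondOrderExpansion_one_sub_exp_neg_div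
  have hu := (linear q).add ((hasSecondOrderExpansion_log_one_add.comp hl hg).const_mul α)
  -- `comp` needs `exp` expanded around the constant term `0 + α * 0` of `hu`.
  have hexp := (by simpa using hasSecondOrderExpansion_exp :
    HasSecondOrderExpansion (𝓝 0) (fun y => exp (0 + α * 0 + y)) 1 1 (1 / 2)).comp hl hu
  have hpos : ∀ᶠ z in 𝓝[≠] 0, 0 < (1 - exp (-z)) / z :=
    hg.tendsto hl |>.eventually (lt_mem_nhds one_pos)
  convert hexp.congr' ?_ using 1
  · ring
  · ring
  · filter_upwards [hpos] with z hz
    rw [rpow_def_of_pos hz, ← exp_add]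
    ring_nf

theorem third_order_conditions_imply_O3_general (α : ℝ)
    (m : ℕ) (p γ : Fin m → ℝ)
    (hc1 : ∑ j, γ j = 1)
    (hc2 : ∑ j, γ j * (p j - α / 2) = 0)
    (hc3 : ∑ j, γ j * ((p j) ^ 2 / 2 - α * p j / 2 + α / 6 + α * (α - 1) / 8) = 0)
    (W : ℝ → ℝ → ℝ)
    (hW : ∀ (q : ℝ) (z : ℝ), z ≠ 0 →
      W q z = Real.exp (q * z) * ((1 - Real.exp (-z)) / z) ^ α)
    (hW0 : ∀ q : ℝ, W q 0 = 1) :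
    (fun z : ℝ => (∑ j, γ j * W (p j) z) - 1) =O[nhds 0] (fun z : ℝ => z ^ 3) := by
  have hWj (j : Fin m) : HasSecondOrderExpansion (𝓝[≠] 0) (W (p j))
      1 (p j - α / 2) ((p j - α / 2) ^ 2 / 2 + α / 24) :=
    (hasSecondOrderExpansion_exp_mul_rpow α (p j)).congr'
      (eventually_mem_nhdsWithin.mono fun z hz => (hW _ z hz).symm)
  have hsum := HasSecondOrderExpansion.sum univ fun j _ => (hWj j).const_mul (γ j)
  have hc3' : ∑ j, γ j * ((p j - α / 2) ^ 2 / 2 + α / 24) = 0 := by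
    rw [← hc3]; exact sum_congr rfl fun j _ => by ring
  simp only [mul_one, hc1, hc2, hc3', HasSecondOrderExpansion] at hsum
  have hzero : (fun z : ℝ => (∑ j, γ j * W (p j) z) - 1) =O[pure 0] fun z => z ^ 3 :=
    isBigO_pure.2 fun _ => by simp [hW0, hc1]
  rw [← nhdsNE_sup_pure]
  exact (hsum.congr_left fun z => by ring).sup hzero

/-- under the third-order tempered-WSGD conditions on
`(p_j, γ_j)`, the combined symbol `∑ γ_j W_{p_j}(z)` equals `1 + O(z³)` as `z → 0`. -/
theorem third_order_conditions_imply_O3 (α : ℝ) (hα1 : 1 < α) (hα2 : α < 2)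
    (m : ℕ) (hm : 1 ≤ m) (p γ : Fin m → ℝ)
    (hc1 : ∑ j, γ j = 1)
    (hc2 : ∑ j, γ j * (p j - α / 2) = 0)
    (hc3 : ∑ j, γ j * ((p j) ^ 2 / 2 - α * p j / 2 + α / 6 + α * (α - 1) / 8) = 0)
    (W : ℝ → ℝ → ℝ)
    (hW : ∀ (q : ℝ) (z : ℝ), z ≠ 0 →
      W q z = Real.exp (q * z) * ((1 - Real.exp (-z)) / z) ^ α)
    (hW0 : ∀ q : ℝ, W q 0 = 1) :
    (fun z : ℝ => (∑ j, γ j * W (p j) z) - 1) =O[nhds 0] (fun z : ℝ => z ^ 3) :=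
  third_order_conditions_imply_O3_general α m p γ hc1 hc2 hc3 W hW hW0
end
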